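/- Let μ = (μ₁, μ₂, μ₃) be complex numbers with μ₁ + μ₂ + μ₃ = 0, set ν₁ = (μ₁−μ₂)/3, ν₂ = (μ₂−μ₃)/3, ν₃ = (μ₃−μ₁)/3, and define S^{−−}(s, μ) = (1/(32π²)) · cos((3/2)πν₃) sin(π(s₁−μ₂)) sin(π(s₂+μ₂)) / (sin((3/2)πν₂) sin((3/2)πν₁)). Let w₄, w₅ act on μ by the cyclic permutations w₄(μ) = (μ₃, μ₁, μ₂) and w₅(μ) = (μ₂, μ₃, μ₁). Then for all s = (s₁, s₂) for which all terms are defined: 32π² ∑_{w ∈ {I, w₄, w₅}} S^{−−}(s, w(μ)) = (1/3) ∑_{w ∈ {I, w₄, w₅}} [ 4 cos(π(s₁ + w(μ)₂/2)) cos(π(s₂ − w(μ)₂/2)) + 2 sin(π(s₁ + w(μ)₂/2)) sin(π(s₂ − w(μ)₂/2)) ], where w(μ)₂ denotes the second coordinate of w(μ). -/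

import Mathlib

/-!
Put `x = π μ₁ / 2`, `y = π μ₂ / 2`, `z = π μ₃ / 2`, `p = π s₁`, `q = π s₂`, so that `x + y + z = 0`
and every angle in the identity is an integer combination of `x, y, p, q`. Once the denominators
`sin (x - y) sin (y - z) sin (z - x)` are cleared, writing `sin` and `cos` through `exp (θ I)`
turns the claim into an identity of Laurent polynomials in `exp (x I), exp (y I), exp (p I), exp (q I)`.
-/

open Complex

noncomputable def Smm (s₁ s₂ μ₁ μ₂ μ₃ : ℂ) : ℂ :=
  (1 / (32 * (Real.pi : ℂ) ^ 2)) *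
    (Complex.cos ((3 / 2) * (Real.pi : ℂ) * ((μ₃ - μ₁) / 3)) *
      Complex.sin ((Real.pi : ℂ) * (s₁ - μ₂)) * Complex.sin ((Real.pi : ℂ) * (s₂ + μ₂))) /
    (Complex.sin ((3 / 2) * (Real.pi : ℂ) * ((μ₂ - μ₃) / 3)) *
      Complex.sin ((3 / 2) * (Real.pi : ℂ) * ((μ₁ - μ₂) / 3)))

open scoped Real

theorem cyclic_trig_identity_mul_sines (p q x y z : ℂ) (h : x + y + z = 0) :
    cos (z - x) * sin (z - x) * sin (p - 2 * y) * sin (q + 2 * y)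
      + cos (y - z) * sin (y - z) * sin (p - 2 * x) * sin (q + 2 * x)
      + cos (x - y) * sin (x - y) * sin (p - 2 * z) * sin (q + 2 * z)
    = sin (x - y) * sin (y - z) * sin (z - x) / 3 *
      ((4 * cos (p + y) * cos (q - y) + 2 * sin (p + y) * sin (q - y))
        + (4 * cos (p + x) * cos (q - x) + 2 * sin (p + x) * sin (q - x))
        + (4 * cos (p + z) * cos (q - z) + 2 * sin (p + z) * sin (q - z))) := by
  obtain rfl : z = -x - y := by linear_combination h
  simp only [sin, cos, neg_mul, add_mul, sub_mul, mul_assoc, exp_add, exp_sub, exp_neg, two_mul]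
  field_simp
  ring_nf
  simp only [I_sq]
  ring_nf

theorem cyclic_trig_identity (p q x y z : ℂ) (h : x + y + z = 0) (hxy : sin (x - y) ≠ 0)
    (hyz : sin (y - z) ≠ 0) (hzx : sin (z - x) ≠ 0) :
    cos (z - x) * sin (p - 2 * y) * sin (q + 2 * y) / (sin (y - z) * sin (x - y))
      + cos (y - z) * sin (p - 2 * x) * sin (q + 2 * x) / (sin (x - y) * sin (z - x))
      + cos (x - y) * sin (p - 2 * z) * sin (q + 2 * z) / (sin (z - x) * sin (y - z))
    = 1 / 3 *
      ((4 * cos (p + y) * cos (q - y) + 2 * sin (p + y) * sin (q - y))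
        + (4 * cos (p + x) * cos (q - x) + 2 * sin (p + x) * sin (q - x))
        + (4 * cos (p + z) * cos (q - z) + 2 * sin (p + z) * sin (q - z))) := by
  rw [div_add_div _ _ (by positivity) (by positivity), div_add_div _ _ (by positivity) (by positivity),
    div_eq_iff (by positivity)]
  linear_combination
    sin (x - y) * sin (y - z) * sin (z - x) * cyclic_trig_identity_mul_sines p q x y z h

theorem trig_identity_minus_minus (s₁ s₂ μ₁ μ₂ μ₃ : ℂ) (hμ : μ₁ + μ₂ + μ₃ = 0)
    (h1 : Complex.sin ((3 / 2) * (Real.pi : ℂ) * ((μ₁ - μ₂) / 3)) ≠ 0)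
    (h2 : Complex.sin ((3 / 2) * (Real.pi : ℂ) * ((μ₂ - μ₃) / 3)) ≠ 0)
    (h3 : Complex.sin ((3 / 2) * (Real.pi : ℂ) * ((μ₃ - μ₁) / 3)) ≠ 0) :
    32 * (Real.pi : ℂ) ^ 2 *
        (Smm s₁ s₂ μ₁ μ₂ μ₃ + Smm s₁ s₂ μ₃ μ₁ μ₂ + Smm s₁ s₂ μ₂ μ₃ μ₁)
      = (1 / 3) *
        ((4 * Complex.cos ((Real.pi : ℂ) * (s₁ + μ₂ / 2)) *
            Complex.cos ((Real.pi : ℂ) * (s₂ - μ₂ / 2)) +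
          2 * Complex.sin ((Real.pi : ℂ) * (s₁ + μ₂ / 2)) *
            Complex.sin ((Real.pi : ℂ) * (s₂ - μ₂ / 2))) +
        (4 * Complex.cos ((Real.pi : ℂ) * (s₁ + μ₁ / 2)) *
            Complex.cos ((Real.pi : ℂ) * (s₂ - μ₁ / 2)) +
          2 * Complex.sin ((Real.pi : ℂ) * (s₁ + μ₁ / 2)) *
            Complex.sin ((Real.pi : ℂ) * (s₂ - μ₁ / 2))) +
        (4 * Complex.cos ((Real.pi : ℂ) * (s₁ + μ₃ / 2)) *
            Complex.cos ((Real.pi : ℂ) * (s₂ - μ₃ / 2)) +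
          2 * Complex.sin ((Real.pi : ℂ) * (s₁ + μ₃ / 2)) *
            Complex.sin ((Real.pi : ℂ) * (s₂ - μ₃ / 2)))) := by
  have hπ : (π : ℂ) ≠ 0 := by exact_mod_cast Real.pi_ne_zero
  convert cyclic_trig_identity (π * s₁) (π * s₂) (π * μ₁ / 2) (π * μ₂ / 2) (π * μ₃ / 2)
    (by linear_combination π / 2 * hμ) (by convert h1 using 2; ring) (by convert h2 using 2; ring)
    (by convert h3 using 2; ring) using 1
  · simp only [Smm]
    field_simp
  · ring_nf
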